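/- Let M ∈ Z_{>=1}, γ > 0, c ∈ (0,1), and let J^{beta} be the M×M symmetric tridiagonal matrix with diagonal entries λ_i = M(c-1) + c(γ+1) + i(1-2c) for 1 <= i <= M and off-diagonal entries w_i = sqrt(c(1-c) i (γ+M-i)) for 1 <= i <= M-1. Then the characteristic polynomial det(z·I - J^{beta}) equals F^{beta}(z) = (Γ(z+M)/Γ(z)) · 2F1(-M, γ; z; c). In particular, all zeros of F^{beta} are real. -/
import Mathlib


/-- The real rising factorial `g^{↑n} = g(g+1)⋯(g+n-1)`. -/
noncomputable def risingFactorial (g : ℝ) (n : ℕ) : ℝ :=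
  ∏ i ∈ Finset.range n, (g + i)

/-- The complex rising factorial `g^{↑n} = g(g+1)⋯(g+n-1)`. -/
noncomputable def risingC (g : ℂ) (n : ℕ) : ℂ :=
  ∏ i ∈ Finset.range n, (g + i)

/-- `F^{beta}(z) = (Γ(z+M)/Γ(z)) · ₂F₁(-M,γ;z;c)` as a function of a real variable. -/
noncomputable def FbetaR (M : ℕ) (γ c : ℝ) (z : ℝ) : ℝ :=
  risingFactorial z M *
    ∑ n ∈ Finset.range (M + 1),
      risingFactorial (-(M : ℝ)) n * risingFactorial γ n / risingFactorial z n
        * c ^ n / (Nat.factorial n : ℝ)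

/-- `F^{beta}(z) = (Γ(z+M)/Γ(z)) · ₂F₁(-M,γ;z;c)` as a function of a complex variable. -/
noncomputable def FbetaC (M : ℕ) (γ c : ℝ) (z : ℂ) : ℂ :=
  risingC z M *
    ∑ n ∈ Finset.range (M + 1),
      risingC (-(M : ℂ)) n * risingC (γ : ℂ) n / risingC z n
        * (c : ℂ) ^ n / (Nat.factorial n : ℂ)

/-- The `M×M` symmetric tridiagonal Jacobi matrix `J^{beta}` with diagonal
entries `λᵢ = M(c-1)+c(γ+1)+i(1-2c)` (for `1 ≤ i ≤ M`) and off-diagonal entries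
`wᵢ = √(c(1-c) i (γ+M-i))` (for `1 ≤ i ≤ M-1`). -/
noncomputable def Jbeta (M : ℕ) (γ c : ℝ) : Matrix (Fin M) (Fin M) ℝ :=
  fun i j =>
    if i = j then (M : ℝ) * (c - 1) + c * (γ + 1) + ((i : ℕ) + 1 : ℝ) * (1 - 2 * c)
    else if (i : ℕ) + 1 = (j : ℕ) then
      Real.sqrt (c * (1 - c) * ((i : ℕ) + 1) * (γ + M - ((i : ℕ) + 1)))
    else if (j : ℕ) + 1 = (i : ℕ) then
      Real.sqrt (c * (1 - c) * ((j : ℕ) + 1) * (γ + M - ((j : ℕ) + 1)))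
    else 0

/-! ### Auxiliary material -/

open Finset

section Aux

lemma risingFactorial_zero' (g : ℝ) : risingFactorial g 0 = 1 := by simp [risingFactorial]

lemma risingFactorial_succ_right (g : ℝ) (n : ℕ) :
    risingFactorial g (n + 1) = risingFactorial g n * (g + n) := by
  simp [risingFactorial, Finset.prod_range_succ]

lemma risingFactorial_succ_left (g : ℝ) (n : ℕ) :
    risingFactorial g (n + 1) = g * risingFactorial (g + 1) n := by
  simp only [risingFactorial, Finset.prod_range_succ', Nat.cast_zero, add_zero, Nat.cast_add,
    Nat.cast_one]
  rw [mul_comm]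
  congr 1
  apply Finset.prod_congr rfl
  intro i _
  ring

/-- Tridiagonal matrix with diagonal `d` and off-diagonal `w`. -/
noncomputable def triM (d w : ℕ → ℝ) (n : ℕ) : Matrix (Fin n) (Fin n) ℝ :=
  fun i j =>
    if (i : ℕ) = (j : ℕ) then d i
    else if (i : ℕ) + 1 = (j : ℕ) then w i
    else if (j : ℕ) + 1 = (i : ℕ) then w j
    else 0

lemma triM_congr {d w d' w' : ℕ → ℝ} {n : ℕ} (hd : ∀ i < n, d i = d' i)
    (hw : ∀ i, i + 1 < n → w i = w' i) : triM d w n = triM d' w' n := by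
  ext i j
  unfold triM
  split_ifs with h1 h2 h3
  · exact hd i i.isLt
  · exact hw i (by omega)
  · exact hw j (by omega)
  · rfl

lemma triM_rev (d w : ℕ → ℝ) (n : ℕ) :
    (triM d w n).det =
      (triM (fun i => d (n - 1 - i)) (fun i => w (n - 2 - i)) n).det := by
  rw [← Matrix.det_submatrix_equiv_self (Fin.revPerm) (triM d w n)]
  congr 1
  ext i j
  simp only [Matrix.submatrix_apply, Fin.revPerm_apply, triM, Fin.val_rev]
  have hi := i.isLt
  have hj := j.isLt
  split_ifs with h1 h2 h3 h4 h5 h6 h7 h8 h9 <;>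
    first
      | rfl
      | omega
      | (congr 1; omega)

lemma triM_expand (d w : ℕ → ℝ) (n : ℕ) :
    (triM d w (n + 2)).det =
      d 0 * (triM (fun i => d (i + 1)) (fun i => w (i + 1)) (n + 1)).det
        - w 0 ^ 2 * (triM (fun i => d (i + 2)) (fun i => w (i + 2)) n).det := by
  rw [Matrix.det_succ_row_zero, Fin.sum_univ_succ, Fin.sum_univ_succ]
  have hz : ∀ j : Fin n, triM d w (n+2) 0 j.succ.succ = 0 := by
    intro j; simp [triM, Fin.ext_iff]
  rw [Finset.sum_eq_zero (fun j _ => by rw [hz]; ring)]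
  have h00 : triM d w (n+2) 0 0 = d 0 := by simp [triM]
  have h01 : triM d w (n+2) 0 (Fin.succ 0) = w 0 := by simp [triM]
  have hsub0 : (triM d w (n+2)).submatrix Fin.succ ((0 : Fin (n+2)).succAbove)
      = triM (fun i => d (i + 1)) (fun i => w (i + 1)) (n + 1) := by
    ext i j
    simp only [Matrix.submatrix_apply, Fin.succAbove_zero, triM, Fin.val_succ]
    split_ifs with h1 h2 h3 <;> first | rfl | omega
  have hB : ((triM d w (n+2)).submatrix Fin.succ ((Fin.succ 0 : Fin (n+2)).succAbove)).det
      = w 0 * (triM (fun i => d (i + 2)) (fun i => w (i + 2)) n).det := by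
    rw [Matrix.det_succ_column_zero, Fin.sum_univ_succ]
    have hcol : ∀ i : Fin n,
        (triM d w (n+2)).submatrix Fin.succ ((Fin.succ 0 : Fin (n+2)).succAbove) i.succ 0 = 0 := by
      intro i
      simp only [Matrix.submatrix_apply, Fin.succ_succAbove_zero]
      simp [triM, Fin.ext_iff]
    rw [Finset.sum_eq_zero (fun i _ => by rw [hcol]; ring)]
    have he : (triM d w (n+2)).submatrix Fin.succ
        ((Fin.succ 0 : Fin (n+2)).succAbove) 0 0 = w 0 := by
      simp only [Matrix.submatrix_apply, Fin.succ_succAbove_zero]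
      simp [triM]
    have hsub : ((triM d w (n+2)).submatrix Fin.succ
        ((Fin.succ 0 : Fin (n+2)).succAbove)).submatrix ((0 : Fin (n+1)).succAbove) Fin.succ
        = triM (fun i => d (i + 2)) (fun i => w (i + 2)) n := by
      ext i j
      simp only [Matrix.submatrix_apply, Fin.succAbove_zero, Fin.succ_succAbove_succ,
        Fin.zero_succAbove, triM, Fin.val_succ]
      split_ifs with h1 h2 h3 <;> first | rfl | omega
    rw [he, hsub]
    simp
  rw [h00, h01, hsub0, hB]
  simp
  ring

lemma triM_rec (d w : ℕ → ℝ) (n : ℕ) :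
    (triM d w (n + 2)).det =
      d (n + 1) * (triM d w (n + 1)).det - w n ^ 2 * (triM d w n).det := by
  rw [triM_rev, triM_expand]
  have h1 : triM (fun i => (fun i => d (n + 2 - 1 - i)) (i + 1))
      (fun i => (fun i => w (n + 2 - 2 - i)) (i + 1)) (n + 1)
      = triM (fun i => d (n - i)) (fun i => w (n - 1 - i)) (n + 1) := by
    apply triM_congr <;> intro i hi <;> (try simp only []) <;> congr 1 <;> omega
  have h2 : triM (fun i => (fun i => d (n + 2 - 1 - i)) (i + 2))
      (fun i => (fun i => w (n + 2 - 2 - i)) (i + 2)) n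
      = triM (fun i => d (n - 1 - i)) (fun i => w (n - 2 - i)) n := by
    apply triM_congr <;> intro i hi <;> (try simp only []) <;> congr 1 <;> omega
  have h3 : (triM (fun i => d (n - i)) (fun i => w (n - 1 - i)) (n + 1)).det
      = (triM d w (n + 1)).det := by
    rw [triM_rev]
    congr 1
    apply triM_congr <;> intro i hi <;> (try simp only []) <;> congr 1 <;> omega
  have h4 : (triM (fun i => d (n - 1 - i)) (fun i => w (n - 2 - i)) n).det
      = (triM d w n).det := by
    rw [triM_rev]
    congr 1
    apply triM_congr <;> intro i hi <;> (try simp only []) <;> congr 1 <;> omega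
  simp only [] at h1 h2 ⊢
  rw [h1, h2, h3, h4]
  norm_num

/-- The degree-`k` member of the Krawtchouk-type family, written as an explicit sum. -/
noncomputable def Gp (c : ℝ) (k : ℕ) (β u : ℝ) : ℝ :=
  ∑ n ∈ Finset.range (k + 1),
    (-1 : ℝ) ^ n * (k.choose n) * risingFactorial β n * c ^ n * ∏ i ∈ Finset.Ico n k, (u + i)

lemma prod_Ico_shift (u : ℝ) (a b s : ℕ) :
    (∏ i ∈ Finset.Ico a b, (u + (s : ℝ) + i)) = ∏ i ∈ Finset.Ico (a + s) (b + s), (u + i) := by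
  rw [Finset.prod_Ico_eq_prod_range, Finset.prod_Ico_eq_prod_range]
  have : b + s - (a + s) = b - a := by omega
  rw [this]
  apply Finset.prod_congr rfl
  intro i _
  push_cast
  ring
lemma Gp_rec (c : ℝ) (k : ℕ) (β u : ℝ) :
    Gp c (k + 2) β u = (u + c * ((k : ℝ) + 1 - β)) * Gp c (k + 1) (β + 1) (u + 1)
      - c * (1 - c) * ((k : ℝ) + 1) * (β + 1) * Gp c k (β + 2) (u + 2) := by
  set f : ℕ → ℝ := fun m => ∏ i ∈ Finset.Ico m (k + 2), (u + i) with hf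
  set A : ℕ → ℝ := fun n => (-1 : ℝ) ^ n * ((k + 1).choose n) * risingFactorial (β + 1) n * c ^ n
    with hA
  set B : ℕ → ℝ := fun n => (-1 : ℝ) ^ n * (k.choose n) * risingFactorial (β + 2) n * c ^ n
    with hB
  set L : ℕ → ℝ := fun n => (-1 : ℝ) ^ n * ((k + 2).choose n) * risingFactorial β n * c ^ n
    with hL
  have hS1 : Gp c (k + 1) (β + 1) (u + 1) = ∑ n ∈ range (k + 2), A n * f (n + 1) := by
    apply Finset.sum_congr rfl
    intro n _
    rw [hA, hf]
    have := prod_Ico_shift u n (k + 1) 1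
    simp only [Nat.cast_one] at this
    rw [show (fun i : ℕ => (u + 1 + (i : ℝ))) = fun i : ℕ => (u + (1:ℝ) + i) from rfl] at this ⊢
    rw [this]
  have hS2 : Gp c k (β + 2) (u + 2) = ∑ n ∈ range (k + 1), B n * f (n + 2) := by
    apply Finset.sum_congr rfl
    intro n _
    rw [hB, hf]
    have := prod_Ico_shift u n k 2
    simp only [Nat.cast_ofNat] at this
    rw [show (fun i : ℕ => (u + 2 + (i : ℝ))) = fun i : ℕ => (u + (2:ℝ) + i) from rfl] at this ⊢
    rw [this]
  rw [hS1, hS2, Finset.mul_sum, Finset.mul_sum]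
  have hsplit : ∀ n ∈ range (k + 2),
      (u + c * ((k : ℝ) + 1 - β)) * (A n * f (n + 1))
        = A n * f n + A n * (c * ((k : ℝ) + 1 - β) - n) * f (n + 1) := by
    intro n hn
    have hfn : f n = (u + n) * f (n + 1) := by
      rw [hf]
      exact Finset.prod_eq_prod_Ico_succ_bot (by simpa using hn) _
    rw [hfn]; ring
  rw [Finset.sum_congr rfl hsplit, Finset.sum_add_distrib]
  have hLHS : Gp c (k + 2) β u = f 0 + ∑ n ∈ range (k + 2), L (n + 1) * f (n + 1) := by
    rw [show Gp c (k + 2) β u = ∑ n ∈ range (k + 3), L n * f n from rfl,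
      Finset.sum_range_succ' (fun n => L n * f n) (k + 2)]
    have hL0 : L 0 = 1 := by simp [hL, risingFactorial_zero']
    rw [hL0]; ring
  have hfirst : ∑ n ∈ range (k + 2), A n * f n
      = f 0 + ∑ n ∈ range (k + 2), A (n + 1) * f (n + 1) := by
    rw [Finset.sum_range_succ' (fun n => A n * f n) (k + 1),
      Finset.sum_range_succ (fun n => A (n + 1) * f (n + 1)) (k + 1)]
    have hA0 : A 0 = 1 := by simp [hA, risingFactorial_zero']
    have hAtop : A (k + 2) = 0 := by
      have : (k + 1).choose (k + 2) = 0 := Nat.choose_succ_self (k + 1)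
      simp [hA, this]
    rw [hA0, hAtop]; ring
  have hthird : ∑ n ∈ range (k + 1), c * (1 - c) * ((k : ℝ) + 1) * (β + 1) * (B n * f (n + 2))
      = ∑ n ∈ range (k + 2),
          (if n = 0 then (0 : ℝ)
            else c * (1 - c) * ((k : ℝ) + 1) * (β + 1) * B (n - 1)) * f (n + 1) := by
    rw [Finset.sum_range_succ' (fun n =>
      (if n = 0 then (0 : ℝ) else c * (1 - c) * ((k : ℝ) + 1) * (β + 1) * B (n - 1)) * f (n + 1))
      (k + 1)]
    norm_num
    apply Finset.sum_congr rfl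
    intro x _
    ring
  rw [hLHS, hfirst, hthird]
  have comb : ∀ n ∈ range (k + 2), L (n + 1) * f (n + 1)
      = A (n + 1) * f (n + 1) + A n * (c * ((k : ℝ) + 1 - β) - n) * f (n + 1)
        - (if n = 0 then (0 : ℝ)
            else c * (1 - c) * ((k : ℝ) + 1) * (β + 1) * B (n - 1)) * f (n + 1) := by
    intro n hn
    have key : L (n + 1) = A (n + 1) + (A n * (c * ((k : ℝ) + 1 - β) - n)
        - (if n = 0 then (0 : ℝ) else c * (1 - c) * ((k : ℝ) + 1) * (β + 1) * B (n - 1))) := by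
      rcases n with _ | m
      · simp only [if_pos rfl, hL, hA, Nat.cast_zero]
        norm_num [risingFactorial_succ_left, risingFactorial_zero']
        push_cast
        ring
      · simp only [if_neg (Nat.succ_ne_zero m), Nat.add_sub_cancel]
        have hm : m ≤ k := by
          simp only [Finset.mem_range] at hn; omega
        have H1 : ((k : ℝ) + 1) * (k.choose m) = ((k + 1).choose (m + 1)) * ((m : ℝ) + 1) := by
          exact_mod_cast Nat.add_one_mul_choose_eq k m
        have H2 : (((k + 1).choose (m + 2)) : ℝ) * ((m : ℝ) + 2)
            = ((k + 1).choose (m + 1)) * ((k : ℝ) - m) := by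
          have h0 := Nat.choose_succ_right_eq (k + 1) (m + 1)
          have h1 : k + 1 - (m + 1) = k - m := by omega
          rw [h1] at h0
          have := congrArg (Nat.cast : ℕ → ℝ) h0
          push_cast [Nat.cast_sub hm] at this
          convert this using 2 <;> push_cast <;> ring
        have H3 : (((k + 2).choose (m + 2)) : ℝ)
            = ((k + 1).choose (m + 1)) + ((k + 1).choose (m + 2)) := by
          exact_mod_cast Nat.choose_succ_succ (k + 1) (m + 1)
        simp only [hL, hA, hB]
        rw [show m + 1 + 1 = m + 2 from rfl, show k + 1 + 1 = k + 2 from rfl]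
        rw [show risingFactorial β (m + 2) = β * ((β + 1) * risingFactorial (β + 2) m) by
            rw [risingFactorial_succ_left, risingFactorial_succ_left,
              show β + 1 + 1 = β + 2 from by ring],
          show risingFactorial (β + 1) (m + 2)
              = (β + 1) * risingFactorial (β + 2) m * ((β + 1) + ((m : ℝ) + 1)) by
            rw [risingFactorial_succ_right, risingFactorial_succ_left,
              show β + 1 + 1 = β + 2 from by ring]; push_cast; ring,
          show risingFactorial (β + 1) (m + 1) = (β + 1) * risingFactorial (β + 2) m by
            rw [risingFactorial_succ_left, show β + 1 + 1 = β + 2 from by ring],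
          H3]
        push_cast
        linear_combination ((-1 : ℝ) ^ m * (β + 1) * risingFactorial (β + 2) m * c ^ (m + 1)
            * (1 - c)) * H1
          - ((-1 : ℝ) ^ m * (β + 1) * risingFactorial (β + 2) m * c ^ (m + 1) * c) * H2
    rw [key]
    ring
  rw [Finset.sum_congr rfl comb, Finset.sum_sub_distrib, Finset.sum_add_distrib]
  ring

lemma det_eq_Gp (M : ℕ) (γ c z : ℝ) (hγ : 0 < γ) (hc : 0 < c) (hc1 : c < 1) :
    ∀ k, k ≤ M →
      (triM (fun i => z - ((M : ℝ) * (c - 1) + c * (γ + 1) + ((i : ℕ) + 1) * (1 - 2 * c)))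
        (fun i => -Real.sqrt (c * (1 - c) * ((i : ℕ) + 1) * (γ + (M : ℝ) - ((i : ℕ) + 1)))) k).det
      = Gp c k (γ + (M : ℝ) - k) (z + (M : ℝ) - k) := by
  set d : ℕ → ℝ := fun i => z - ((M : ℝ) * (c - 1) + c * (γ + 1) + ((i : ℕ) + 1) * (1 - 2 * c))
    with hd
  set w : ℕ → ℝ := fun i =>
    -Real.sqrt (c * (1 - c) * ((i : ℕ) + 1) * (γ + (M : ℝ) - ((i : ℕ) + 1))) with hw
  intro k
  induction k using Nat.strong_induction_on with
  | _ k ih =>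
    rcases k with _ | k
    · intro _
      simp only [Matrix.det_fin_zero, Gp, Nat.cast_zero]
      simp [risingFactorial]
    · rcases k with _ | k
      · intro _
        rw [show (triM d w 1).det = d 0 from Matrix.det_fin_one _]
        simp only [Gp, Finset.sum_range_succ, Finset.sum_range_zero]
        simp [risingFactorial, hd]
        push_cast
        ring
      · intro hk2
        rw [triM_rec, ih (k + 1) (by omega) (by omega), ih k (by omega) (by omega)]
        have e1 : γ + (M : ℝ) - ((k + 1 : ℕ) : ℝ) = (γ + (M : ℝ) - ((k + 2 : ℕ) : ℝ)) + 1 := by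
          push_cast; ring
        have e2 : z + (M : ℝ) - ((k + 1 : ℕ) : ℝ) = (z + (M : ℝ) - ((k + 2 : ℕ) : ℝ)) + 1 := by
          push_cast; ring
        have e3 : γ + (M : ℝ) - ((k : ℕ) : ℝ) = (γ + (M : ℝ) - ((k + 2 : ℕ) : ℝ)) + 2 := by
          push_cast; ring
        have e4 : z + (M : ℝ) - ((k : ℕ) : ℝ) = (z + (M : ℝ) - ((k + 2 : ℕ) : ℝ)) + 2 := by
          push_cast; ring
        rw [e1, e2, e3, e4, Gp_rec]
        have hdv : d (k + 1) = (z + (M : ℝ) - ((k + 2 : ℕ) : ℝ))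
            + c * ((k : ℝ) + 1 - (γ + (M : ℝ) - ((k + 2 : ℕ) : ℝ))) := by
          rw [hd]; push_cast; ring
        have hM : ((k : ℝ) + 2) ≤ (M : ℝ) := by exact_mod_cast hk2
        have harg : 0 ≤ c * (1 - c) * ((k : ℕ) + 1 : ℝ) * (γ + (M : ℝ) - (((k : ℕ) : ℝ) + 1)) := by
          have h1 : (0:ℝ) < 1 - c := by linarith
          have h2 : (0:ℝ) < ((k : ℕ) : ℝ) + 1 := by positivity
          have h3 : (0:ℝ) < γ + (M : ℝ) - (((k : ℕ) : ℝ) + 1) := by linarith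
          positivity
        have hwv : w k ^ 2 = c * (1 - c) * ((k : ℝ) + 1)
            * ((γ + (M : ℝ) - ((k + 2 : ℕ) : ℝ)) + 1) := by
          rw [hw]
          rw [neg_sq, Real.sq_sqrt harg]
          push_cast
          ring
        rw [hdv, hwv]

lemma eval_charpoly_gen {n : ℕ} {R : Type*} [CommRing R] (A : Matrix (Fin n) (Fin n) R) (z : R) :
    (Matrix.charpoly A).eval z
      = (Matrix.of fun i j => (if i = j then z else 0) - A i j).det := by
  rw [Matrix.charpoly]
  have : Polynomial.eval z A.charmatrix.det
      = (Polynomial.evalRingHom z) A.charmatrix.det := rfl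
  rw [this, RingHom.map_det (Polynomial.evalRingHom z)]
  congr 1
  ext i j
  rcases eq_or_ne i j with h | h
  · simp [h, Matrix.charmatrix_apply_eq]
  · simp [h, Matrix.charmatrix_apply_ne _ _ _ h]

lemma risingFactorial_neg_nat (M n : ℕ) (h : n ≤ M) :
    risingFactorial (-(M : ℝ)) n = (-1) ^ n * (n.factorial : ℝ) * (M.choose n) := by
  unfold risingFactorial
  have h1 : ∀ i ∈ range n, (-(M : ℝ) + i) = (-1) * ((M - i : ℕ) : ℝ) := by
    intro i hi
    have hi' : i ≤ M := le_trans (le_of_lt (mem_range.1 hi)) h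
    push_cast [Nat.cast_sub hi']
    ring
  rw [Finset.prod_congr rfl h1, Finset.prod_mul_distrib, Finset.prod_const]
  rw [← Nat.cast_prod, ← Nat.descFactorial_eq_prod_range, Nat.descFactorial_eq_factorial_mul_choose]
  push_cast
  rw [Finset.card_range]
  ring

lemma risingC_ofReal (x : ℝ) (n : ℕ) : risingC ((x : ℝ) : ℂ) n = ((risingFactorial x n : ℝ) : ℂ) := by
  unfold risingC risingFactorial
  push_cast
  rfl

lemma FbetaR_eq_Gp (M : ℕ) (γ c z : ℝ) (hz : ∀ i : ℕ, i < M → z ≠ -(i : ℝ)) :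
    FbetaR M γ c z = Gp c M γ z := by
  unfold FbetaR Gp
  rw [Finset.mul_sum]
  apply Finset.sum_congr rfl
  intro n hn
  have hnM : n ≤ M := by simpa [Nat.lt_succ_iff] using hn
  have hne : risingFactorial z n ≠ 0 := by
    unfold risingFactorial
    rw [Finset.prod_ne_zero_iff]
    intro i hi
    have : i < M := lt_of_lt_of_le (mem_range.1 hi) hnM
    have := hz i this
    intro h0
    exact this (by linarith)
  have hsplit : risingFactorial z M
      = risingFactorial z n * ∏ i ∈ Finset.Ico n M, (z + i) :=
    (Finset.prod_range_mul_prod_Ico _ hnM).symm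
  rw [hsplit, risingFactorial_neg_nat M n hnM]
  have hfac : (n.factorial : ℝ) ≠ 0 := by positivity
  field_simp

lemma FbetaC_eq (M : ℕ) (γ c : ℝ) (z : ℂ) (hz : z.im ≠ 0) :
    FbetaC M γ c z = ∑ n ∈ Finset.range (M + 1),
      ((-1 : ℂ) ^ n * (M.choose n) * ((risingFactorial γ n : ℝ) : ℂ) * (c : ℂ) ^ n)
        * ∏ i ∈ Finset.Ico n M, (z + (i : ℂ)) := by
  unfold FbetaC
  rw [Finset.mul_sum]
  apply Finset.sum_congr rfl
  intro n hn
  have hnM : n ≤ M := by simpa [Nat.lt_succ_iff] using hn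
  have hne : risingC z n ≠ 0 := by
    unfold risingC
    rw [Finset.prod_ne_zero_iff]
    intro i _ h0
    apply hz
    have := congrArg Complex.im h0
    simpa using this
  have hsplit : risingC z M = risingC z n * ∏ i ∈ Finset.Ico n M, (z + i) :=
    (Finset.prod_range_mul_prod_Ico _ hnM).symm
  have hneg : risingC (-(M : ℂ)) n = ((-1 : ℂ)) ^ n * (n.factorial : ℂ) * (M.choose n) := by
    have h1 : (-(M : ℂ)) = (((-(M : ℝ)) : ℝ) : ℂ) := by push_cast; ring
    rw [h1, risingC_ofReal, risingFactorial_neg_nat M n hnM]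
    push_cast
    ring
  rw [hsplit, hneg, risingC_ofReal γ n]
  have hfac : ((n.factorial : ℂ)) ≠ 0 := by
    simp [Nat.factorial_ne_zero]
  field_simp

lemma Jbeta_symm (M : ℕ) (γ c : ℝ) (i j : Fin M) : Jbeta M γ c i j = Jbeta M γ c j i := by
  unfold Jbeta
  rcases eq_or_ne i j with h | h
  · simp [h]
  · rw [if_neg h, if_neg (Ne.symm h)]
    have h' : (i : ℕ) ≠ (j : ℕ) := fun hh => h (Fin.ext hh)
    split_ifs <;> first | rfl | omega

lemma herm_root_real (M : ℕ) (γ c : ℝ) (z : ℂ)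
    (hdet : (Matrix.of fun i j : Fin M =>
      (if i = j then z else 0) - ((Jbeta M γ c i j : ℝ) : ℂ)).det = 0) : z.im = 0 := by
  obtain ⟨v, hv0, hv⟩ := Matrix.exists_mulVec_eq_zero_iff.mpr hdet
  set A : Matrix (Fin M) (Fin M) ℂ := fun i j => ((Jbeta M γ c i j : ℝ) : ℂ) with hA
  have heig : ∀ i, ∑ j, A i j * v j = z * v i := by
    intro i
    have h0 := congrFun hv i
    simp only [Matrix.mulVec, dotProduct, Matrix.of_apply, Pi.zero_apply, sub_mul,
      Finset.sum_sub_distrib] at h0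
    have h1 : ∑ j, (if i = j then z else 0) * v j = z * v i := by
      simp [ite_mul]
    rw [h1] at h0
    have := sub_eq_zero.mp h0
    rw [← this]
  set t : ℂ := ∑ i, (starRingEnd ℂ) (v i) * v i with ht
  set s : ℂ := ∑ i, (starRingEnd ℂ) (v i) * ∑ j, A i j * v j with hs
  have hszt : s = z * t := by
    rw [hs, ht, Finset.mul_sum]
    apply Finset.sum_congr rfl
    intro i _
    rw [heig i]
    ring
  have hAconj : ∀ i j, (starRingEnd ℂ) (A i j) = A i j := fun i j => Complex.conj_ofReal _
  have hAsymm : ∀ i j, A i j = A j i := by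
    intro i j
    rw [hA]
    exact congrArg _ (Jbeta_symm M γ c i j)
  have hconj : (starRingEnd ℂ) s = s :=
    calc (starRingEnd ℂ) s
        = ∑ i, v i * ∑ j, A i j * (starRingEnd ℂ) (v j) := by
          rw [hs, map_sum]
          apply Finset.sum_congr rfl
          intro i _
          simp [map_mul, map_sum, hAconj]
      _ = ∑ i, ∑ j, A i j * v i * (starRingEnd ℂ) (v j) := by
          apply Finset.sum_congr rfl
          intro i _
          rw [Finset.mul_sum]
          apply Finset.sum_congr rfl
          intro j _
          ring
      _ = ∑ j, ∑ i, A i j * v i * (starRingEnd ℂ) (v j) := Finset.sum_comm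
      _ = ∑ j, (starRingEnd ℂ) (v j) * ∑ i, A j i * v i := by
          apply Finset.sum_congr rfl
          intro j _
          rw [Finset.mul_sum]
          apply Finset.sum_congr rfl
          intro i _
          rw [hAsymm i j]
          ring
      _ = s := by rw [hs]
  have htr : (starRingEnd ℂ) t = t := by
    rw [ht, map_sum]
    apply Finset.sum_congr rfl
    intro i _
    simp [map_mul]
    ring
  have htne : t ≠ 0 := by
    have htv : t = ((∑ i, Complex.normSq (v i) : ℝ) : ℂ) := by
      rw [ht]
      push_cast
      apply Finset.sum_congr rfl
      intro i _
      rw [mul_comm, Complex.mul_conj]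
    rw [htv]
    obtain ⟨i0, hi0⟩ := Function.ne_iff.mp hv0
    have hpos : 0 < ∑ i, Complex.normSq (v i) := by
      apply Finset.sum_pos' (fun i _ => Complex.normSq_nonneg _)
      exact ⟨i0, Finset.mem_univ _, Complex.normSq_pos.2 hi0⟩
    exact_mod_cast ne_of_gt hpos
  have : z * t = (starRingEnd ℂ) z * t := by
    have h1 := hconj
    rw [hszt, map_mul, htr] at h1
    rw [← h1]
  have hz : z = (starRingEnd ℂ) z := mul_right_cancel₀ htne this
  rw [← Complex.conj_eq_iff_im]
  exact hz.symm

end Aux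

/-- The characteristic polynomial candidate, as an actual polynomial. -/
noncomputable def Pb (M : ℕ) (γ c : ℝ) : Polynomial ℝ :=
  ∑ n ∈ Finset.range (M + 1),
    Polynomial.C ((-1 : ℝ) ^ n * (M.choose n) * risingFactorial γ n * c ^ n)
      * ∏ i ∈ Finset.Ico n M, (Polynomial.X + Polynomial.C ((i : ℕ) : ℝ))

lemma eval_Pb (M : ℕ) (γ c z : ℝ) : (Pb M γ c).eval z = Gp c M γ z := by
  unfold Pb Gp
  rw [Polynomial.eval_finset_sum]
  apply Finset.sum_congr rfl
  intro n _
  rw [Polynomial.eval_mul, Polynomial.eval_C, Polynomial.eval_prod]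
  simp

lemma eval_Pb_map (M : ℕ) (γ c : ℝ) (z : ℂ) :
    ((Pb M γ c).map (algebraMap ℝ ℂ)).eval z
      = ∑ n ∈ Finset.range (M + 1),
        ((-1 : ℂ) ^ n * (M.choose n) * ((risingFactorial γ n : ℝ) : ℂ) * (c : ℂ) ^ n)
          * ∏ i ∈ Finset.Ico n M, (z + (i : ℂ)) := by
  rw [Polynomial.eval_map]
  unfold Pb
  rw [Polynomial.eval₂_finset_sum]
  apply Finset.sum_congr rfl
  intro n _
  rw [Polynomial.eval₂_mul, Polynomial.eval₂_C, Polynomial.eval₂_finset_prod]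
  simp only [Polynomial.eval₂_add, Polynomial.eval₂_X, Polynomial.eval₂_C,
    Complex.coe_algebraMap]
  push_cast
  ring_nf

lemma eval_charpoly_Jbeta (M : ℕ) (γ c z : ℝ) :
    (Matrix.charpoly (Jbeta M γ c)).eval z
      = (triM (fun i => z - ((M : ℝ) * (c - 1) + c * (γ + 1) + ((i : ℕ) + 1) * (1 - 2 * c)))
          (fun i => -Real.sqrt (c * (1 - c) * ((i : ℕ) + 1) * (γ + (M : ℝ) - ((i : ℕ) + 1))))
          M).det := by
  rw [eval_charpoly_gen]
  congr 1
  ext i j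
  simp only [Matrix.of_apply, triM, Jbeta]
  rcases eq_or_ne i j with h | h
  · subst h
    simp
  · have h' : (i : ℕ) ≠ (j : ℕ) := fun hh => h (Fin.ext hh)
    simp only [if_neg h, if_neg h']
    split_ifs <;> ring

lemma charpoly_eq_Pb (M : ℕ) (γ c : ℝ) (hγ : 0 < γ) (hc : 0 < c) (hc1 : c < 1) :
    Matrix.charpoly (Jbeta M γ c) = Pb M γ c := by
  apply Polynomial.funext
  intro z
  rw [eval_charpoly_Jbeta, eval_Pb, det_eq_Gp M γ c z hγ hc hc1 M le_rfl]
  have e1 : γ + (M : ℝ) - (M : ℝ) = γ := by ring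
  have e2 : z + (M : ℝ) - (M : ℝ) = z := by ring
  rw [e1, e2]

/-- the characteristic polynomial `det(z·I - J^{beta})` equals
`F^{beta}(z) = (Γ(z+M)/Γ(z)) · ₂F₁(-M,γ;z;c)`; in particular all zeros of
`F^{beta}` are real. -/
theorem charpoly_Jbeta (M : ℕ) (hM : 1 ≤ M) (γ c : ℝ)
    (hγ : 0 < γ) (hc : 0 < c) (hc1 : c < 1) :
    (∀ z : ℝ, (∀ i : ℕ, i < M → z ≠ -(i : ℝ)) →
      Polynomial.eval z (Matrix.charpoly (Jbeta M γ c)) = FbetaR M γ c z) ∧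
    (∀ z : ℂ, FbetaC M γ c z = 0 → z.im = 0) := by
  constructor
  · intro z hz
    rw [charpoly_eq_Pb M γ c hγ hc hc1, eval_Pb, FbetaR_eq_Gp M γ c z hz]
  · intro z hz0
    by_contra him
    have him' : z.im ≠ 0 := him
    -- evaluate the mapped polynomial at z
    have h1 : ((Pb M γ c).map (algebraMap ℝ ℂ)).eval z = 0 := by
      rw [eval_Pb_map, ← FbetaC_eq M γ c z him', hz0]
    have h2 : (Matrix.charpoly ((Jbeta M γ c).map (algebraMap ℝ ℂ))).eval z = 0 := by
      rw [Matrix.charpoly_map, charpoly_eq_Pb M γ c hγ hc hc1]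
      exact h1
    rw [eval_charpoly_gen] at h2
    apply him'
    have hmm : (Matrix.of fun i j : Fin M =>
          (if i = j then z else 0) - ((Jbeta M γ c).map (⇑(algebraMap ℝ ℂ))) i j)
        = (Matrix.of fun i j : Fin M =>
          (if i = j then z else 0) - ((Jbeta M γ c i j : ℝ) : ℂ)) := by
      ext i j
      simp [Matrix.map_apply]
    rw [hmm] at h2
    exact herm_root_real M γ c z h2
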